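/- The proof system UM is sound: every formula φ ∈ L derivable in UM is valid, i.e., (M,s) ⊨ φ for every epistemic state (M,s). -/

import Mathlib

/-- Formulas of the language `L` of epistemic logic with updates (events of
epistemic and/or ontic change).  The constructor `upd` inlines an update
`(U,e)`: an event type `E`, accessibility relations on events, preconditions,
postconditions, and the actual event `e`.  `⊤` and `⊥` are included as the
usual primitives. -/
inductive Form (A P : Type) : Type 1 where
  | atom : P → Form A P
  | top : Form A P
  | bot : Form A P
  | neg : Form A P → Form A P
  | and : Form A P → Form A P → Form A P
  | box : A → Form A P → Form A P
  | cbox : Set A → Form A P → Form A P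
  | upd : (E : Type) → (A → E → E → Prop) → (E → Form A P) → (E → P → Form A P) →
      E → Form A P → Form A P

/-- An update model `U = (E, rel, pre, post)`. -/
structure Upd (A P : Type) : Type 1 where
  E : Type
  rel : A → E → E → Prop
  pre : E → Form A P
  post : E → P → Form A P

/-- An epistemic model `M = (S, R, V)`. -/
structure Model (A P : Type) : Type 1 where
  S : Type
  R : A → S → S → Prop
  V : P → S → Prop

/-- The formula `[U,e]φ`. -/
def Form.updF {A P : Type} (U : Upd A P) (e : U.E) (φ : Form A P) : Form A P :=
  Form.upd U.E U.rel U.pre U.post e φ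

/-- The product construction, parameterised by the satisfaction relations of the
preconditions and postconditions of the events. -/
def prodM {A P : Type} (M : Model A P) (E : Type) (rel : A → E → E → Prop)
    (preS : E → M.S → Prop) (postS : E → M.S → P → Prop) : Model A P where
  S := { x : M.S × E // preS x.2 x.1 }
  R a x y := M.R a x.1.1 y.1.1 ∧ rel a x.1.2 y.1.2
  V p x := postS x.1.2 x.1.1 p

/-- Satisfaction: `sat φ M s` is `(M,s) ⊨ φ`. -/
def sat {A P : Type} : Form A P → (M : Model A P) → M.S → Prop
  | .atom p, M, s => M.V p s
  | .top, _, _ => True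
  | .bot, _, _ => False
  | .neg φ, M, s => ¬ sat φ M s
  | .and φ ψ, M, s => sat φ M s ∧ sat ψ M s
  | .box a φ, M, s => ∀ t, M.R a s t → sat φ M t
  | .cbox B φ, M, s =>
      ∀ t, Relation.ReflTransGen (fun x y => ∃ a ∈ B, M.R a x y) s t → sat φ M t
  | .upd E rel pre post e φ, M, s =>
      ∀ h : sat (pre e) M s,
        sat φ (prodM M E rel (fun f t => sat (pre f) M t) (fun f t p => sat (post f p) M t))
          ⟨(s, e), h⟩

/-- The product update `M ⊗ U`; its domain is `{(t,f) | (M,t) ⊨ pre(f)}`. -/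
def Model.prodUpd {A P : Type} (M : Model A P) (U : Upd A P) : Model A P :=
  prodM M U.E U.rel (fun f t => sat (U.pre f) M t) (fun f t p => sat (U.post f p) M t)

/-- Well-formedness of a formula: all event sets of update models occurring in it are
finite and nonempty, and all postconditions differ from the identity `p ↦ p` on only
finitely many atoms (this finite set being the domain `dom(post(e))`). -/
def Form.WF {A P : Type} : Form A P → Prop
  | .atom _ => True
  | .top => True
  | .bot => True
  | .neg φ => φ.WF
  | .and φ ψ => φ.WF ∧ ψ.WF
  | .box _ φ => φ.WF
  | .cbox _ φ => φ.WF
  | .upd E _ pre post _ φ =>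
      Nonempty E ∧ Finite E ∧ (∀ f, (pre f).WF) ∧ (∀ f p, (post f p).WF) ∧
      (∀ f, {p | post f p ≠ Form.atom p}.Finite) ∧ φ.WF

/-- Well-formedness of an update model: the event set is finite and nonempty, the
preconditions and postconditions are well-formed formulas, and each postcondition
differs from the identity on only finitely many atoms, the set
`{p | post e p ≠ atom p}` being the domain `dom(post(e))`. -/
def Upd.WF {A P : Type} (U : Upd A P) : Prop :=
  Nonempty U.E ∧ Finite U.E ∧ (∀ f, (U.pre f).WF) ∧ (∀ f p, (U.post f p).WF) ∧
  (∀ f, {p | U.post f p ≠ Form.atom p}.Finite)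

/-- Disjunction, as the usual abbreviation. -/
def Form.or {A P : Type} (φ ψ : Form A P) : Form A P := (φ.neg.and ψ.neg).neg

/-- Implication, as the usual abbreviation. -/
def Form.imp {A P : Type} (φ ψ : Form A P) : Form A P := (φ.and ψ.neg).neg

/-- Bi-implication, as the usual abbreviation. -/
def Form.biImp {A P : Type} (φ ψ : Form A P) : Form A P := (φ.imp ψ).and (ψ.imp φ)

/-- Finite conjunction of a list of formulas. -/
def bigAnd {A P : Type} (l : List (Form A P)) : Form A P := l.foldr Form.and Form.top

/-- Finite disjunction of a list of formulas. -/
def bigOr {A P : Type} (l : List (Form A P)) : Form A P := l.foldr Form.or Form.bot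

open Classical in
/-- Composition `(U,e) ; (U',e')` of update models: the underlying update model has
events `E × E'`, `pre''(f,f') = pre(f) ∧ [U,f]pre'(f')`, and for `p ∈ dom(post''(f,f'))
= dom(post(f)) ∪ dom(post'(f'))`: `post''(f,f')(p) = post(f)(p)` if `p ∉ dom(post'(f'))`
and `[U,f]post'(f')(p)` otherwise; the point is the pair `(e,e')`. -/
noncomputable def Upd.comp {A P : Type} (U U' : Upd A P) : Upd A P where
  E := U.E × U'.E
  rel a x y := U.rel a x.1 y.1 ∧ U'.rel a x.2 y.2
  pre x := (U.pre x.1).and (Form.updF U x.1 (U'.pre x.2))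
  post x p :=
    if U'.post x.2 p = Form.atom p then U.post x.1 p
    else Form.updF U x.1 (U'.post x.2 p)

/-- Propositional formulas in `n` variables (templates for instantiations of
propositional tautologies). -/
inductive PropForm : ℕ → Type where
  | var {n : ℕ} : Fin n → PropForm n
  | top {n : ℕ} : PropForm n
  | bot {n : ℕ} : PropForm n
  | neg {n : ℕ} : PropForm n → PropForm n
  | and {n : ℕ} : PropForm n → PropForm n → PropForm n

/-- Boolean evaluation of a propositional template. -/
def PropForm.eval {n : ℕ} (v : Fin n → Bool) : PropForm n → Bool
  | .var i => v i
  | .top => true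
  | .bot => false
  | .neg t => !(t.eval v)
  | .and t u => t.eval v && u.eval v

/-- Substitution of formulas for the variables of a propositional template. -/
def PropForm.subst {A P : Type} {n : ℕ} (σ : Fin n → Form A P) : PropForm n → Form A P
  | .var i => σ i
  | .top => Form.top
  | .bot => Form.bot
  | .neg t => Form.neg (t.subst σ)
  | .and t u => Form.and (t.subst σ) (u.subst σ)

/-- A propositional template is a tautology: true under every Boolean valuation. -/
def PropForm.Taut {n : ℕ} (t : PropForm n) : Prop := ∀ v : Fin n → Bool, t.eval v = true

/-- The proof system UM. -/
inductive Deriv {A P : Type} : Form A P → Prop where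
  /-- all instantiations of propositional tautologies -/
  | taut {n : ℕ} (t : PropForm n) (σ : Fin n → Form A P) (ht : t.Taut)
      (hσ : ∀ i, (σ i).WF) : Deriv (t.subst σ)
  /-- distribution for `[a]` -/
  | distBox (a : A) (φ ψ : Form A P) (hφ : φ.WF) (hψ : ψ.WF) :
      Deriv (Form.imp (Form.box a (Form.imp φ ψ)) (Form.imp (Form.box a φ) (Form.box a ψ)))
  /-- distribution for `[B*]` -/
  | distCbox (B : Set A) (φ ψ : Form A P) (hφ : φ.WF) (hψ : ψ.WF) :
      Deriv (Form.imp (Form.cbox B (Form.imp φ ψ)) (Form.imp (Form.cbox B φ) (Form.cbox B ψ)))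
  /-- distribution for `[U,e]` -/
  | distUpd (U : Upd A P) (e : U.E) (hU : U.WF) (φ ψ : Form A P) (hφ : φ.WF) (hψ : ψ.WF) :
      Deriv (Form.imp (Form.updF U e (Form.imp φ ψ))
        (Form.imp (Form.updF U e φ) (Form.updF U e ψ)))
  /-- modus ponens -/
  | mp {φ ψ : Form A P} : Deriv (Form.imp φ ψ) → Deriv φ → Deriv ψ
  /-- necessitation for `[a]` -/
  | necBox (a : A) {φ : Form A P} : Deriv φ → Deriv (Form.box a φ)
  /-- necessitation for `[B*]` -/
  | necCbox (B : Set A) {φ : Form A P} : Deriv φ → Deriv (Form.cbox B φ)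
  /-- necessitation for `[U,e]` -/
  | necUpd (U : Upd A P) (e : U.E) (hU : U.WF) {φ : Form A P} :
      Deriv φ → Deriv (Form.updF U e φ)
  /-- update and atoms -/
  | updAtom (U : Upd A P) (e : U.E) (hU : U.WF) (p : P) :
      Deriv (Form.biImp (Form.updF U e (Form.atom p)) (Form.imp (U.pre e) (U.post e p)))
  /-- update and negation -/
  | updNeg (U : Upd A P) (e : U.E) (hU : U.WF) (φ : Form A P) (hφ : φ.WF) :
      Deriv (Form.biImp (Form.updF U e (Form.neg φ))
        (Form.imp (U.pre e) (Form.neg (Form.updF U e φ))))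
  /-- update and conjunction -/
  | updAnd (U : Upd A P) (e : U.E) (hU : U.WF) (φ ψ : Form A P) (hφ : φ.WF) (hψ : ψ.WF) :
      Deriv (Form.biImp (Form.updF U e (Form.and φ ψ))
        (Form.and (Form.updF U e φ) (Form.updF U e ψ)))
  /-- update and knowledge (`lf` enumerates `{f | (e,f) ∈ R(a)}`) -/
  | updBox (U : Upd A P) (e : U.E) (hU : U.WF) (a : A) (φ : Form A P) (hφ : φ.WF)
      (lf : List U.E) (hlf : ∀ f, f ∈ lf ↔ U.rel a e f) :
      Deriv (Form.biImp (Form.updF U e (Form.box a φ))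
        (Form.imp (U.pre e) (bigAnd (lf.map fun f => Form.box a (Form.updF U f φ)))))
  /-- update composition -/
  | updComp (U : Upd A P) (e : U.E) (U' : Upd A P) (e' : U'.E) (hU : U.WF) (hU' : U'.WF)
      (φ : Form A P) (hφ : φ.WF) :
      Deriv (Form.biImp (Form.updF U e (Form.updF U' e' φ))
        (Form.updF (U.comp U') (e, e') φ))
  /-- mix (`lB` enumerates `B`; `[B]ψ` is the conjunction `⋀_{a ∈ B} [a]ψ`) -/
  | mix (B : Set A) (lB : List A) (hlB : ∀ a, a ∈ lB ↔ a ∈ B) (φ : Form A P) (hφ : φ.WF) :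
      Deriv (Form.imp (Form.cbox B φ)
        (Form.and φ (bigAnd (lB.map fun a => Form.box a (Form.cbox B φ)))))
  /-- induction axiom -/
  | induc (B : Set A) (lB : List A) (hlB : ∀ a, a ∈ lB ↔ a ∈ B) (φ : Form A P) (hφ : φ.WF) :
      Deriv (Form.imp (Form.cbox B (Form.imp φ (bigAnd (lB.map fun a => Form.box a φ))))
        (Form.imp φ (Form.cbox B φ)))
  /-- updates and common knowledge -/
  | updCK (U : Upd A P) (e : U.E) (hU : U.WF) (B : Set A) (φ : Form A P) (hφ : φ.WF)
      (χ : U.E → Form A P) (hχ : ∀ f, (χ f).WF)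
      (h1 : ∀ f, Relation.ReflTransGen (fun x y => ∃ a ∈ B, U.rel a x y) e f →
        Deriv (Form.imp (χ f) (Form.updF U f φ)))
      (h2 : ∀ f, Relation.ReflTransGen (fun x y => ∃ a ∈ B, U.rel a x y) e f →
        ∀ a ∈ B, ∀ g, U.rel a f g →
          Deriv (Form.imp (Form.and (χ f) (U.pre f)) (Form.box a (χ g)))) :
      Deriv (Form.imp (χ e) (Form.updF U e (Form.cbox B φ)))


/-! Soundness is proved by induction on derivations, each axiom being checked on product
updates directly. Two points need an idea. The composition axiom holds because
`(M ⊗ U) ⊗ U'` is isomorphic to `M ⊗ (U ; U')` and satisfaction is invariant under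
isomorphism. For the updates-and-common-knowledge rule, the premises make `χ` an invariant:
every state `(t, f)` reachable from `(s, e)` along `B`-arrows of `M ⊗ U` has `f` reachable
from `e` in `U` and satisfies `χ f` at `t`, hence `[U,f]φ` at `t`, i.e. `φ` at `(t, f)`. -/

theorem Relation.reflTransGen_iff_of_equiv {α β : Type*} {r : α → α → Prop}
    {r' : β → β → Prop} (e : α ≃ β) (h : ∀ x y, r x y ↔ r' (e x) (e y)) {x y : α} :
    Relation.ReflTransGen r x y ↔ Relation.ReflTransGen r' (e x) (e y) := by
  refine ⟨Relation.ReflTransGen.lift e (fun a b hab => (h a b).mp hab) x y, fun hxy => ?_⟩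
  simpa [Function.onFun] using
    Relation.ReflTransGen.lift e.symm (fun a b hab => (h _ _).mpr (by simpa using hab)) _ _ hxy

namespace Model

variable {A P : Type}

structure Iso (M N : Model A P) where
  toEquiv : M.S ≃ N.S
  rel_iff : ∀ a s t, M.R a s t ↔ N.R a (toEquiv s) (toEquiv t)
  val_iff : ∀ p s, M.V p s ↔ N.V p (toEquiv s)

theorem Iso.reach_iff {M N : Model A P} (g : M.Iso N) (B : Set A) {s t : M.S} :
    Relation.ReflTransGen (fun x y => ∃ a ∈ B, M.R a x y) s t ↔
      Relation.ReflTransGen (fun x y => ∃ a ∈ B, N.R a x y) (g.toEquiv s) (g.toEquiv t) :=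
  Relation.reflTransGen_iff_of_equiv g.toEquiv fun x y =>
    exists_congr fun a => and_congr_right' (g.rel_iff a x y)

def Iso.prodM {M N : Model A P} (g : M.Iso N) (E : Type) (rel : A → E → E → Prop)
    {preM : E → M.S → Prop} {postM : E → M.S → P → Prop}
    {preN : E → N.S → Prop} {postN : E → N.S → P → Prop}
    (hpre : ∀ f s, preM f s ↔ preN f (g.toEquiv s))
    (hpost : ∀ f s p, postM f s p ↔ postN f (g.toEquiv s) p) :
    (_root_.prodM M E rel preM postM).Iso (_root_.prodM N E rel preN postN) where
  toEquiv := (g.toEquiv.prodCongr (Equiv.refl E)).subtypeEquiv fun x => hpre x.2 x.1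
  rel_iff a x y := and_congr_left' (g.rel_iff a x.1.1 y.1.1)
  val_iff p x := hpost x.1.2 x.1.1 p

end Model

section Semantics

variable {A P : Type}

theorem sat_iff_of_iso (φ : Form A P) :
    ∀ {M N : Model A P} (g : M.Iso N) (s : M.S), sat φ M s ↔ sat φ N (g.toEquiv s) := by
  induction φ with
  | atom p => exact fun g s => g.val_iff p s
  | top | bot => exact fun _ _ => Iff.rfl
  | neg φ ih => exact fun g s => not_congr (ih g s)
  | and φ ψ ihφ ihψ => exact fun g s => and_congr (ihφ g s) (ihψ g s)
  | box a φ ih =>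
    exact fun g s => g.toEquiv.forall_congr fun t => imp_congr (g.rel_iff a s t) (ih g t)
  | cbox B φ ih =>
    exact fun g s => g.toEquiv.forall_congr fun t => imp_congr (g.reach_iff B) (ih g t)
  | upd E rel pre post e φ ihpre ihpost ih =>
    intro M N g s
    let G := g.prodM E rel
      (preM := fun f t => sat (pre f) M t) (preN := fun f t => sat (pre f) N t)
      (postM := fun f t p => sat (post f p) M t) (postN := fun f t p => sat (post f p) N t)
      (fun f t => ihpre f g t) (fun f t p => ihpost f p g t)
    exact ⟨fun h hN => (ih G ⟨(s, e), (ihpre e g s).mpr hN⟩).mp (h _),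
      fun h hM => (ih G ⟨(s, e), hM⟩).mpr (h _)⟩

theorem sat_imp {φ ψ : Form A P} {M : Model A P} {s : M.S} :
    sat (φ.imp ψ) M s ↔ (sat φ M s → sat ψ M s) := by
  simp only [Form.imp, sat]
  tauto

theorem sat_biImp {φ ψ : Form A P} {M : Model A P} {s : M.S} :
    sat (φ.biImp ψ) M s ↔ (sat φ M s ↔ sat ψ M s) := by
  simp only [Form.biImp, sat, sat_imp]
  tauto

theorem sat_bigAnd_map {ι : Type*} (l : List ι) (F : ι → Form A P) {M : Model A P} {s : M.S} :
    sat (bigAnd (l.map F)) M s ↔ ∀ i ∈ l, sat (F i) M s := by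
  induction l with
  | nil => simp [bigAnd, sat]
  | cons i l ih => simpa [bigAnd, sat] using and_congr_right' ih

theorem sat_bigAnd_map_box {B : Set A} {lB : List A} (hlB : ∀ a, a ∈ lB ↔ a ∈ B)
    (ψ : Form A P) {M : Model A P} {s : M.S} :
    sat (bigAnd (lB.map fun a => Form.box a ψ)) M s ↔ ∀ a ∈ B, ∀ t, M.R a s t → sat ψ M t := by
  simp only [sat_bigAnd_map, hlB, sat]

open Classical in
theorem sat_subst {n : ℕ} (σ : Fin n → Form A P) (t : PropForm n) {M : Model A P} {s : M.S} :
    sat (t.subst σ) M s ↔ t.eval (fun i => decide (sat (σ i) M s)) = true := by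
  induction t with
  | var i => simp [PropForm.subst, PropForm.eval]
  | top | bot => simp [PropForm.subst, PropForm.eval, sat]
  | neg t ih => simp [PropForm.subst, PropForm.eval, sat, ih]
  | and t u iht ihu => simp [PropForm.subst, PropForm.eval, sat, iht, ihu]

theorem sat_cbox {B : Set A} {φ : Form A P} {M : Model A P} {s : M.S} :
    sat (Form.cbox B φ) M s ↔
      ∀ t, Relation.ReflTransGen (fun x y => ∃ a ∈ B, M.R a x y) s t → sat φ M t :=
  Iff.rfl

theorem sat_cbox_iff {B : Set A} {φ : Form A P} {M : Model A P} {s : M.S} :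
    sat (Form.cbox B φ) M s ↔
      sat φ M s ∧ ∀ a ∈ B, ∀ t, M.R a s t → sat (Form.cbox B φ) M t := by
  simp only [sat_cbox]
  refine ⟨fun h => ⟨h s .refl, fun a ha t hst u htu => h u (.head ⟨a, ha, hst⟩ htu)⟩, ?_⟩
  rintro ⟨hs, hstep⟩ u hsu
  rcases hsu.cases_head with rfl | ⟨t, ⟨a, ha, hst⟩, htu⟩
  exacts [hs, hstep a ha t hst u htu]

theorem sat_cbox_of_invariant {B : Set A} {φ : Form A P} {M : Model A P} {s : M.S}
    (hinv : ∀ t, Relation.ReflTransGen (fun x y => ∃ a ∈ B, M.R a x y) s t →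
      sat φ M t → ∀ a ∈ B, ∀ u, M.R a t u → sat φ M u)
    (hs : sat φ M s) : sat (Form.cbox B φ) M s := by
  intro t hst
  induction hst with
  | refl => exact hs
  | tail hsu hut ih =>
    obtain ⟨a, ha, hut⟩ := hut
    exact hinv _ hsu ih a ha _ hut

theorem sat_updF {U : Upd A P} {e : U.E} {φ : Form A P} {M : Model A P} {s : M.S} :
    sat (Form.updF U e φ) M s ↔ ∀ h : sat (U.pre e) M s, sat φ (M.prodUpd U) ⟨(s, e), h⟩ :=
  Iff.rfl

theorem sat_updF_atom {U : Upd A P} {e : U.E} {p : P} {M : Model A P} {s : M.S} :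
    sat (Form.updF U e (Form.atom p)) M s ↔ (sat (U.pre e) M s → sat (U.post e p) M s) :=
  Iff.rfl

theorem sat_updF_neg {U : Upd A P} {e : U.E} {φ : Form A P} {M : Model A P} {s : M.S} :
    sat (Form.updF U e φ.neg) M s ↔ (sat (U.pre e) M s → ¬ sat (Form.updF U e φ) M s) :=
  ⟨fun h hpre hφ => h hpre (hφ hpre), fun h hpre hφ => h hpre fun _ => hφ⟩

theorem sat_updF_and {U : Upd A P} {e : U.E} {φ ψ : Form A P} {M : Model A P} {s : M.S} :
    sat (Form.updF U e (φ.and ψ)) M s ↔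
      sat (Form.updF U e φ) M s ∧ sat (Form.updF U e ψ) M s :=
  forall_and

theorem sat_updF_box {U : Upd A P} {e : U.E} {a : A} {φ : Form A P} {M : Model A P}
    {s : M.S} :
    sat (Form.updF U e (Form.box a φ)) M s ↔
      (sat (U.pre e) M s → ∀ f, U.rel a e f → sat (Form.box a (Form.updF U f φ)) M s) := by
  refine ⟨fun h hpre f hef t hst hf => h hpre ⟨(t, f), hf⟩ ⟨hst, hef⟩, ?_⟩
  rintro h hpre ⟨⟨t, f⟩, hf⟩ ⟨hst, hef⟩
  exact h hpre f hef t hst hf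

end Semantics

section Composition

variable {A P : Type}

theorem sat_comp_post (U U' : Upd A P) {M : Model A P} {t : M.S} {f : U.E}
    (hf : sat (U.pre f) M t) (f' : U'.E) (p : P) :
    sat ((U.comp U').post (f, f') p) M t ↔ sat (U'.post f' p) (M.prodUpd U) ⟨(t, f), hf⟩ := by
  by_cases hp : U'.post f' p = Form.atom p
  · simp only [Upd.comp, hp]
    rfl
  · simp only [Upd.comp, if_neg hp, sat_updF]
    exact ⟨fun h => h hf, fun h _ => h⟩

def Model.prodUpdCompIso (M : Model A P) (U U' : Upd A P) :
    ((M.prodUpd U).prodUpd U').Iso (M.prodUpd (U.comp U')) where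
  toEquiv :=
    { toFun x := ⟨(x.1.1.1.1, (x.1.1.1.2, x.1.2)), x.1.1.2, fun _ => x.2⟩
      invFun y := ⟨(⟨(y.1.1, y.1.2.1), y.2.1⟩, y.1.2.2), y.2.2 y.2.1⟩
      left_inv _ := rfl
      right_inv _ := rfl }
  rel_iff _ _ _ := and_assoc
  val_iff p x := (sat_comp_post U U' x.1.1.2 x.1.2 p).symm

theorem sat_updF_updF {U U' : Upd A P} {e : U.E} {e' : U'.E} {φ : Form A P}
    {M : Model A P} {s : M.S} :
    sat (Form.updF U e (Form.updF U' e' φ)) M s ↔ sat (Form.updF (U.comp U') (e, e') φ) M s := by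
  have hiso := sat_iff_of_iso φ (M.prodUpdCompIso U U')
  exact ⟨fun h hpre =>
      (hiso ⟨(⟨(s, e), hpre.1⟩, e'), hpre.2 hpre.1⟩).mp (h hpre.1 (hpre.2 hpre.1)),
    fun h hpre hpre' => (hiso ⟨(⟨(s, e), hpre⟩, e'), hpre'⟩).mpr (h ⟨hpre, fun _ => hpre'⟩)⟩

end Composition

section CommonKnowledge

variable {A P : Type} {U : Upd A P} {B : Set A} {M : Model A P}

theorem Model.prodUpd_reach_event {x y : (M.prodUpd U).S}
    (hxy : Relation.ReflTransGen (fun x y => ∃ a ∈ B, (M.prodUpd U).R a x y) x y) :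
    Relation.ReflTransGen (fun f g => ∃ a ∈ B, U.rel a f g) x.1.2 y.1.2 :=
  Relation.ReflTransGen.lift (fun x => x.1.2) (fun _ _ ⟨a, ha, _, hfg⟩ => ⟨a, ha, hfg⟩) x y hxy

theorem sat_updF_cbox_of_invariant {e : U.E} {φ : Form A P} {χ : U.E → Form A P}
    (hφ : ∀ f, Relation.ReflTransGen (fun x y => ∃ a ∈ B, U.rel a x y) e f →
      ∀ t, sat (χ f) M t → sat (Form.updF U f φ) M t)
    (hχ : ∀ f, Relation.ReflTransGen (fun x y => ∃ a ∈ B, U.rel a x y) e f →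
      ∀ a ∈ B, ∀ g, U.rel a f g → ∀ t, sat (χ f) M t → sat (U.pre f) M t →
        sat (Form.box a (χ g)) M t)
    {s : M.S} (hs : sat (χ e) M s) : sat (Form.updF U e (Form.cbox B φ)) M s := by
  intro hpre x hx
  have hχx : sat (χ x.1.2) M x.1.1 := by
    induction hx with
    | refl => exact hs
    | @tail y z hy hyz ih =>
      obtain ⟨a, ha, hR, hrel⟩ := hyz
      exact hχ _ (Model.prodUpd_reach_event hy) a ha _ hrel _ ih y.2 _ hR
  exact hφ _ (Model.prodUpd_reach_event hx) _ hχx x.2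

end CommonKnowledge

theorem Deriv.valid {A P : Type} {φ : Form A P} (hφ : Deriv φ) (M : Model A P) (s : M.S) :
    sat φ M s := by
  induction hφ generalizing M s with
  | taut t σ ht => exact sat_subst σ t |>.mpr (ht _)
  | distBox | distCbox =>
    simp only [sat_imp, sat]
    exact fun h hφ t hst => h t hst (hφ t hst)
  | distUpd =>
    simp only [sat_imp, sat_updF]
    exact fun h hφ hpre => sat_imp.mp (h hpre) (hφ hpre)
  | mp _ _ ih₁ ih₂ => exact sat_imp.mp (ih₁ M s) (ih₂ M s)
  | necBox _ _ ih | necCbox _ _ ih => exact fun t _ => ih M t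
  | necUpd _ _ _ _ ih => exact fun _ => ih _ _
  | updAtom => exact sat_biImp.mpr (sat_updF_atom.trans sat_imp.symm)
  | updNeg =>
    rw [sat_biImp, sat_imp]
    exact sat_updF_neg
  | updAnd => exact sat_biImp.mpr sat_updF_and
  | updBox _ _ _ _ _ _ _ hlf =>
    rw [sat_biImp, sat_imp, sat_bigAnd_map, sat_updF_box]
    simp only [hlf]
  | updComp => exact sat_biImp.mpr sat_updF_updF
  | mix _ _ hlB =>
    exact sat_imp.mpr fun h => (sat_cbox_iff.mp h).imp_right (sat_bigAnd_map_box hlB _).mpr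
  | induc _ _ hlB φ =>
    rw [sat_imp, sat_imp]
    refine fun hinv => sat_cbox_of_invariant fun t hst ht => ?_
    exact (sat_bigAnd_map_box hlB φ).mp (sat_imp.mp (hinv t hst) ht)
  | updCK _ _ _ _ _ _ _ _ _ _ ih₁ ih₂ =>
    refine sat_imp.mpr (sat_updF_cbox_of_invariant (fun f hf t => sat_imp.mp (ih₁ f hf M t)) ?_)
    exact fun f hf a ha g hfg t hχ hpre => sat_imp.mp (ih₂ f hf a ha g hfg M t) ⟨hχ, hpre⟩

theorem um_soundness_general {A P : Type}
    (φ : Form A P) (hderiv : Deriv φ) :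
    ∀ M : Model A P, Nonempty M.S → ∀ s : M.S, sat φ M s :=
  fun M _ s => hderiv.valid M s

/-- the proof system UM is sound: every formula `φ ∈ L` derivable in
UM is valid, i.e. `(M,s) ⊨ φ` for every epistemic state `(M,s)`. -/
theorem um_soundness {A P : Type} [Finite A] [Countable P]
    (φ : Form A P) (hφ : φ.WF) (hderiv : Deriv φ) :
    ∀ M : Model A P, Nonempty M.S → ∀ s : M.S, sat φ M s :=
  um_soundness_general φ hderiv
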